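/- An object M of C_A^λ satisfies M = U(g⊗A)·M_λ if and only if Hom_{C_A^λ}(M, N) = 0 for every object N of C_A^λ with N_λ = 0. -/
import Mathlib


open scoped TensorProduct

universe u v w

/-- A Lie superalgebra structure on a `k`-vector space `g`: a `ℤ₂`-grading together with
a bilinear super-bracket satisfying super-anticommutativity and the super Jacobi identity. -/
structure LieSuperStr (k : Type u) (g : Type v) [Field k] [AddCommGroup g] [Module k g] where
  ε : ZMod 2 → Submodule k g
  cover : ε 0 ⊔ ε 1 = ⊤
  disj : ε 0 ⊓ ε 1 = ⊥
  br : g →ₗ[k] g →ₗ[k] g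
  br_mem : ∀ i j : ZMod 2, ∀ x ∈ ε i, ∀ y ∈ ε j, br x y ∈ ε (i + j)
  skew : ∀ i j : ZMod 2, ∀ x ∈ ε i, ∀ y ∈ ε j,
    br x y = -(((-1 : k) ^ (i.val * j.val)) • br y x)
  jacobi : ∀ i j : ZMod 2, ∀ x ∈ ε i, ∀ y ∈ ε j, ∀ z : g,
    br x (br y z) = br (br x y) z + ((-1 : k) ^ (i.val * j.val)) • br y (br x z)

/-- A presentation of an associative unital `k`-algebra `E` as the universal enveloping
superalgebra of the Lie superalgebra `L`. -/
structure EnvPresentation (k : Type u) (g : Type v) (E : Type w) [Field k]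
    [AddCommGroup g] [Module k g] [Ring E] [Algebra k E] (L : LieSuperStr k g) where
  ι : g →ₗ[k] E
  inj : Function.Injective ι
  gen : Algebra.adjoin k (Set.range ι) = ⊤
  scomm : ∀ i j : ZMod 2, ∀ x ∈ L.ε i, ∀ y ∈ L.ε j,
    ι x * ι y - ((-1 : k) ^ (i.val * j.val)) • (ι y * ι x) = ι (L.br x y)
  universal : ∀ (B : Type w) [Ring B] [Algebra k B] (f : g →ₗ[k] B),
    (∀ i j : ZMod 2, ∀ x ∈ L.ε i, ∀ y ∈ L.ε j,
      f x * f y - ((-1 : k) ^ (i.val * j.val)) • (f y * f x) = f (L.br x y)) →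
    ∃! φ : E →ₐ[k] B, ∀ x, φ (ι x) = f x

/-- A Lie subsuperalgebra: a graded subspace closed under the super-bracket. -/
structure SubSuper {k : Type u} {g : Type v} [Field k] [AddCommGroup g] [Module k g]
    (L : LieSuperStr k g) where
  t : Submodule k g
  graded : t = (t ⊓ L.ε 0) ⊔ (t ⊓ L.ε 1)
  closed : ∀ x ∈ t, ∀ y ∈ t, L.br x y ∈ t

/-- The universal enveloping superalgebra of a subsuperalgebra, realized as the subalgebra
it generates inside the enveloping superalgebra of the ambient Lie superalgebra. -/
noncomputable def SubSuper.env {k : Type u} {g : Type v} {E : Type w} [Field k]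
    [AddCommGroup g] [Module k g] [Ring E] [Algebra k E] {L : LieSuperStr k g}
    (t : SubSuper L) (P : EnvPresentation k g E L) : Subalgebra k E :=
  Algebra.adjoin k (P.ι '' t.t)

/-- Relations defining the induced module `E ⊗_T M` inside `E ⊗_k M`. -/
noncomputable def inducedRel (k : Type u) (E : Type w) [Field k] [Ring E] [Algebra k E]
    (T : Subalgebra k E) (M : Type*) [AddCommGroup M] [Module k M] [Module ↥T M] :
    Submodule E (E ⊗[k] M) :=
  Submodule.span E {z | ∃ (e : E) (s : ↥T) (m : M),
    z = (e * (s : E)) ⊗ₜ[k] m - e ⊗ₜ[k] (s • m)}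

/-- The induced module `Ind_T^E M = E ⊗_T M`. -/
noncomputable def Induced (k : Type u) (E : Type w) [Field k] [Ring E] [Algebra k E]
    (T : Subalgebra k E) (M : Type*) [AddCommGroup M] [Module k M] [Module ↥T M] :=
  (E ⊗[k] M) ⧸ inducedRel k E T M

noncomputable instance (k : Type u) (E : Type w) [Field k] [Ring E] [Algebra k E]
    (T : Subalgebra k E) (M : Type*) [AddCommGroup M] [Module k M] [Module ↥T M] :
    AddCommGroup (Induced k E T M) := by unfold Induced; infer_instance

noncomputable instance (k : Type u) (E : Type w) [Field k] [Ring E] [Algebra k E]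
    (T : Subalgebra k E) (M : Type*) [AddCommGroup M] [Module k M] [Module ↥T M] :
    Module E (Induced k E T M) := by unfold Induced; infer_instance

/-- A `k`-subspace `N` of a module is stable under the action of a set `s` of elements
of the algebra `E`. -/
def SubStable (k : Type u) {E : Type w} [Field k] [Ring E] (s : Set E)
    {M : Type*} [AddCommGroup M] [Module k M] [Module E M] (N : Submodule k M) : Prop :=
  ∀ u ∈ s, ∀ m ∈ N, u • m ∈ N

/-- `M` is *finitely semisimple* for the action of the set `s ⊆ E`: it is the sum of its
finite-dimensional irreducible `s`-stable subspaces (hence the direct sum of some of them). -/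
def FinSS (k : Type u) {E : Type w} [Field k] [Ring E] (s : Set E)
    (M : Type*) [AddCommGroup M] [Module k M] [Module E M] : Prop :=
  sSup {N : Submodule k M | SubStable k s N ∧ FiniteDimensional k ↥N ∧ N ≠ ⊥ ∧
    ∀ Q : Submodule k M, Q ≤ N → SubStable k s Q → Q = ⊥ ∨ Q = N} = ⊤

/-- A bundled module over the algebra `E`, with compatible `k`-structure. -/
structure ModuleOver (k : Type u) (E : Type w) [Field k] [Ring E] [Algebra k E] where
  X : Type w
  [iAdd : AddCommGroup X]
  [iMod : Module E X]
  [iK : Module k X]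
  [iTower : IsScalarTower k E X]

attribute [instance] ModuleOver.iAdd ModuleOver.iMod ModuleOver.iK ModuleOver.iTower

/-- The `μ`-weight space of a module over `E`, where the Cartan subalgebra acts through
the map `act : H → E`. -/
def weightSpace (k : Type u) {E : Type w} [Field k] [Ring E] [Algebra k E]
    {H : Type*} [AddCommGroup H] [Module k H]
    (act : H → E) (μ : H →ₗ[k] k)
    (M : Type*) [AddCommGroup M] [Module k M] [Module E M] [IsScalarTower k E M] :
    Submodule k M where
  carrier := {m | ∀ x : H, act x • m = μ x • m}
  add_mem' := by
    intro a b ha hb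
    intro x
    rw [smul_add, smul_add, ha x, hb x]
  zero_mem' := by intro x; simp
  smul_mem' := by
    intro c m hm
    intro x
    have h1 : act x • (c • m) = c • (act x • m) := by
      rw [← algebraMap_smul E c m, ← mul_smul, ← Algebra.commutes c (act x), mul_smul,
        algebraMap_smul]
    rw [h1, hm x, smul_smul, mul_comm, ← smul_smul]

noncomputable instance (k : Type u) (E : Type w) [Field k] [Ring E] [Algebra k E]
    (T : Subalgebra k E) (M : Type*) [AddCommGroup M] [Module k M] [Module ↥T M] :
    Module k (Induced k E T M) := by unfold Induced; infer_instance

noncomputable instance (k : Type u) (E : Type w) [Field k] [Ring E] [Algebra k E]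
    (T : Subalgebra k E) (M : Type*) [AddCommGroup M] [Module k M] [Module ↥T M] :
    IsScalarTower k E (Induced k E T M) := by unfold Induced; infer_instance

section Kac

variable {k : Type u} {g : Type v} {E : Type w} [Field k]
  [AddCommGroup g] [Module k g] [Ring E] [Algebra k E]

/-- The defining relations of the generalized Kac module `K(λ)`:
`n⁺`, `h − λ(h)` for `h ∈ 𝔥`, and `(x_α⁻)^{λ(h_α)+1}` for the simple roots `α` of `r`
(indexed by `Δ`, with negative root vectors `xm α` and `λ(h_α) = nn α`). -/
noncomputable def kacRelations {L : LieSuperStr k g} (P : EnvPresentation k g E L)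
    (hsub nplus : Submodule k g) (lam : Module.Dual k ↥hsub)
    (Δ : Type) (xm : Δ → g) (nn : Δ → ℕ) : Set E :=
  (⇑P.ι '' (nplus : Set g)) ∪
  {e : E | ∃ x : ↥hsub, e = P.ι ↑x - algebraMap k E (lam x)} ∪
  {e : E | ∃ α : Δ, e = P.ι (xm α) ^ (nn α + 1)}

/-- The generalized Kac module `K(λ)`, the quotient of `U(g)` by the left ideal
generated by the defining relations. -/
noncomputable def KacModule {L : LieSuperStr k g} (P : EnvPresentation k g E L)
    (hsub nplus : Submodule k g) (lam : Module.Dual k ↥hsub)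
    (Δ : Type) (xm : Δ → g) (nn : Δ → ℕ) :=
  E ⧸ Submodule.span E (kacRelations P hsub nplus lam Δ xm nn)

noncomputable instance {L : LieSuperStr k g} (P : EnvPresentation k g E L)
    (hsub nplus : Submodule k g) (lam : Module.Dual k ↥hsub)
    (Δ : Type) (xm : Δ → g) (nn : Δ → ℕ) :
    AddCommGroup (KacModule P hsub nplus lam Δ xm nn) := by
  unfold KacModule; infer_instance

noncomputable instance {L : LieSuperStr k g} (P : EnvPresentation k g E L)
    (hsub nplus : Submodule k g) (lam : Module.Dual k ↥hsub)
    (Δ : Type) (xm : Δ → g) (nn : Δ → ℕ) :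
    Module E (KacModule P hsub nplus lam Δ xm nn) := by
  unfold KacModule; infer_instance

noncomputable instance {L : LieSuperStr k g} (P : EnvPresentation k g E L)
    (hsub nplus : Submodule k g) (lam : Module.Dual k ↥hsub)
    (Δ : Type) (xm : Δ → g) (nn : Δ → ℕ) :
    Module k (KacModule P hsub nplus lam Δ xm nn) := by
  unfold KacModule; infer_instance

/-- `λ ∈ X⁺`: there is a finite-dimensional irreducible `g`-module of highest weight `λ`
(with respect to the Borel subsuperalgebra `𝔥 ⊕ n⁺`). -/
def MemXplus {L : LieSuperStr k g} (P : EnvPresentation k g E L)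
    (hsub nplus : Submodule k g) (lam : Module.Dual k ↥hsub) : Prop :=
  ∃ (V : ModuleOver k E) (v : V.X), FiniteDimensional k V.X ∧ v ≠ 0 ∧
    (∀ x ∈ nplus, P.ι x • v = 0) ∧ (∀ x : ↥hsub, P.ι ↑x • v = lam x • v) ∧
    Submodule.span E {v} = ⊤ ∧
    (∀ N : Submodule E V.X, N = ⊥ ∨ N = ⊤)

end Kac

/-- A presentation of an associative unital `k`-algebra `E` as the universal enveloping
superalgebra of the map (current) Lie superalgebra `g ⊗ A`:  `ι x a` is the element
`x ⊗ a`, and the supercommutators satisfy `[x ⊗ a, y ⊗ b] = [x,y] ⊗ ab`. -/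
structure CurrentPresentation (k : Type u) (g : Type v) (A : Type u) (E : Type w) [Field k]
    [AddCommGroup g] [Module k g] [CommRing A] [Algebra k A] [Ring E] [Algebra k E]
    (L : LieSuperStr k g) where
  ι : g →ₗ[k] A →ₗ[k] E
  gen : Algebra.adjoin k {e : E | ∃ (x : g) (a : A), e = ι x a} = ⊤
  scomm : ∀ i j : ZMod 2, ∀ x ∈ L.ε i, ∀ y ∈ L.ε j, ∀ a b : A,
    ι x a * ι y b - ((-1 : k) ^ (i.val * j.val)) • (ι y b * ι x a) = ι (L.br x y) (a * b)

noncomputable instance {k : Type u} {g : Type v} {E : Type w} [Field k]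
    [AddCommGroup g] [Module k g] [Ring E] [Algebra k E]
    {L : LieSuperStr k g} (P : EnvPresentation k g E L)
    (hsub nplus : Submodule k g) (lam : Module.Dual k ↥hsub)
    (Δ : Type) (xm : Δ → g) (nn : Δ → ℕ) :
    IsScalarTower k E (KacModule P hsub nplus lam Δ xm nn) := by
  unfold KacModule; infer_instance

section WeylShared

variable {k : Type u} {g : Type v} {A : Type u} {UA : Type w} [Field k]
  [AddCommGroup g] [Module k g] [CommRing A] [Algebra k A] [Ring UA] [Algebra k UA]
variable (L : LieSuperStr k g)

/-- The set of elements `x ⊗ 1 ∈ U(g ⊗ A)`, `x ∈ r`; finite semisimplicity over the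
reductive part `r` is stability-semisimplicity for this set. -/
def rSetCur (C : CurrentPresentation k g A UA L) (r : Submodule k g) : Set UA :=
  {e : UA | ∃ x ∈ r, e = C.ι x 1}

/-- The defining relations of the global Weyl module `W_A(λ)` inside `U(g ⊗ A)`:
`n⁺ ⊗ A`, `h − λ(h)` for `h ∈ 𝔥`, and `(x_α⁻)^{λ(h_α)+1}` for the simple roots of `r`. -/
noncomputable def weylRel (C : CurrentPresentation k g A UA L)
    (hsub nplus : Submodule k g) (lam : Module.Dual k ↥hsub)
    (Δ : Type) (xm : Δ → g) (nn : Δ → ℕ) : Set UA :=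
  {e : UA | ∃ x ∈ nplus, ∃ a : A, e = C.ι x a} ∪
  {e : UA | ∃ x : ↥hsub, e = C.ι ↑x 1 - algebraMap k UA (lam x)} ∪
  {e : UA | ∃ α : Δ, e = C.ι (xm α) 1 ^ (nn α + 1)}

/-- The global Weyl module `W_A(λ)`, presented by its generator and defining relations. -/
noncomputable abbrev GlobalWeylP (C : CurrentPresentation k g A UA L)
    (hsub nplus : Submodule k g) (lam : Module.Dual k ↥hsub)
    (Δ : Type) (xm : Δ → g) (nn : Δ → ℕ) : Type w :=
  UA ⧸ Submodule.span UA (weylRel L C hsub nplus lam Δ xm nn)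

/-- The highest-weight generator `w_λ` of the global Weyl module. -/
noncomputable def weylGen (C : CurrentPresentation k g A UA L)
    (hsub nplus : Submodule k g) (lam : Module.Dual k ↥hsub)
    (Δ : Type) (xm : Δ → g) (nn : Δ → ℕ) :
    GlobalWeylP L C hsub nplus lam Δ xm nn :=
  Submodule.Quotient.mk (1 : UA)

/-- The subalgebra `U(𝔥 ⊗ A) ⊆ U(g ⊗ A)`. -/
noncomputable def CartanCurrent (C : CurrentPresentation k g A UA L)
    (hsub : Submodule k g) : Subalgebra k UA :=
  Algebra.adjoin k {e : UA | ∃ (x : ↥hsub) (a : A), e = C.ι ↑x a}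

/-- Membership in the category `C_A^λ`: a `(g ⊗ A)`-module that is finitely semisimple
over the reductive part `r`, all of whose weights `μ` satisfy `μ ≤ λ`. -/
def InCat (C : CurrentPresentation k g A UA L) (r hsub : Submodule k g)
    (Rplus : Set (Module.Dual k ↥hsub)) (lam : Module.Dual k ↥hsub)
    (X : ModuleOver k UA) : Prop :=
  FinSS k (rSetCur L C r) X.X ∧
  ∀ μ : Module.Dual k ↥hsub,
    weightSpace k (fun x : ↥hsub => C.ι ↑x 1) μ X.X ≠ ⊥ →
    lam - μ ∈ AddSubmonoid.closure Rplus

end WeylShared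

section AuxProof

variable {k : Type u} {E : Type w} [Field k] [Ring E] [Algebra k E]
  {M : Type*} [AddCommGroup M] [Module k M] [Module E M] [IsScalarTower k E M]
  (s : Set E)

theorem subStable_sup' {C1 C2 : Submodule k M} (h1 : SubStable k s C1) (h2 : SubStable k s C2) :
    SubStable k s (C1 ⊔ C2) := by
  intro u hu m hm
  rcases Submodule.mem_sup.mp hm with ⟨a, ha, b, hb, rfl⟩
  exact Submodule.mem_sup.mpr ⟨u • a, h1 u hu a ha, u • b, h2 u hu b hb, (smul_add u a b).symm⟩

theorem subStable_inf' {C1 C2 : Submodule k M} (h1 : SubStable k s C1) (h2 : SubStable k s C2) :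
    SubStable k s (C1 ⊓ C2) := fun u hu m hm => ⟨h1 u hu m hm.1, h2 u hu m hm.2⟩

theorem exists_stable_compl' (hss : FinSS k s M) (K : Submodule E M) :
    ∃ Cm : Submodule k M, SubStable k s Cm ∧ Cm ⊓ K.restrictScalars k = ⊥ ∧
      K.restrictScalars k ⊔ Cm = ⊤ := by
  classical
  have hss' : sSup {N : Submodule k M | SubStable k s N ∧ FiniteDimensional k ↥N ∧ N ≠ ⊥ ∧
      ∀ Q : Submodule k M, Q ≤ N → SubStable k s Q → Q = ⊥ ∨ Q = N} = ⊤ := hss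
  set Kk := K.restrictScalars k with hKk
  have hKst : SubStable k s Kk := fun u hu m hm => K.smul_mem u hm
  set P : Set (Submodule k M) := {Cm | SubStable k s Cm ∧ Cm ⊓ Kk = ⊥} with hP
  have ih : ∀ c ⊆ P, IsChain (· ≤ ·) c → ∃ ub ∈ P, ∀ z ∈ c, z ≤ ub := by
    intro c hcP hchain
    rcases c.eq_empty_or_nonempty with rfl | hne
    · exact ⟨⊥, ⟨fun u hu m hm => by simp_all, bot_inf_eq _⟩, fun z hz => absurd hz (by simp)⟩
    · refine ⟨sSup c, ⟨?_, ?_⟩, fun z hz => le_sSup hz⟩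
      · intro u hu m hm
        obtain ⟨y, hy, hmy⟩ := (Submodule.mem_sSup_of_directed hne hchain.directedOn).mp hm
        exact le_sSup hy ((hcP hy).1 u hu m hmy)
      · rw [eq_bot_iff]
        rintro x ⟨hx1, hx2⟩
        obtain ⟨y, hy, hmy⟩ := (Submodule.mem_sSup_of_directed hne hchain.directedOn).mp hx1
        have : x ∈ y ⊓ Kk := ⟨hmy, hx2⟩
        rw [(hcP hy).2] at this
        exact this
  obtain ⟨Cm, hCmP, hmax⟩ := zorn_le₀ P ih
  refine ⟨Cm, hCmP.1, hCmP.2, ?_⟩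
  rw [eq_top_iff, ← hss']
  refine sSup_le fun S hS => ?_
  by_contra hnle
  have hstabKC : SubStable k s (Kk ⊔ Cm) := subStable_sup' s hKst hCmP.1
  have hQ : S ⊓ (Kk ⊔ Cm) = ⊥ ∨ S ⊓ (Kk ⊔ Cm) = S :=
    hS.2.2.2 _ inf_le_left (subStable_inf' s hS.1 hstabKC)
  rcases hQ with hQ | hQ
  · have hmem : Cm ⊔ S ∈ P := by
      refine ⟨subStable_sup' s hCmP.1 hS.1, ?_⟩
      rw [eq_bot_iff]
      rintro x ⟨hx1, hx2⟩
      rcases Submodule.mem_sup.mp hx1 with ⟨cc, hcc, ss, hss', rfl⟩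
      have hssm : ss ∈ S ⊓ (Kk ⊔ Cm) := by
        refine ⟨hss', ?_⟩
        have : (cc + ss) - cc ∈ Kk ⊔ Cm :=
          sub_mem (le_sup_left (a := Kk) (b := Cm) hx2) (le_sup_right (a := Kk) hcc)
        simpa using this
      rw [hQ] at hssm
      simp only [Submodule.mem_bot] at hssm
      subst hssm
      have : cc ∈ Cm ⊓ Kk := ⟨hcc, by simpa using hx2⟩
      rw [hCmP.2] at this
      simpa using this
    have hle : Cm ⊔ S ≤ Cm := hmax hmem le_sup_left
    exact hnle (le_trans (le_trans le_sup_right hle) le_sup_right)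
  · exact hnle (inf_eq_left.mp hQ)

theorem finSS_quot' (hss : FinSS k s M) (K : Submodule E M) : FinSS k s (M ⧸ K) := by
  classical
  have hss' : sSup {N : Submodule k M | SubStable k s N ∧ FiniteDimensional k ↥N ∧ N ≠ ⊥ ∧
      ∀ Q : Submodule k M, Q ≤ N → SubStable k s Q → Q = ⊥ ∨ Q = N} = ⊤ := hss
  show sSup {N : Submodule k (M ⧸ K) | SubStable k s N ∧ FiniteDimensional k ↥N ∧ N ≠ ⊥ ∧
      ∀ Q : Submodule k (M ⧸ K), Q ≤ N → SubStable k s Q → Q = ⊥ ∨ Q = N} = ⊤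
  set π : M →ₗ[k] M ⧸ K := LinearMap.restrictScalars k K.mkQ with hπ
  have hπs : Function.Surjective π := K.mkQ_surjective
  have hπc : ∀ (u : E) (m : M), π (u • m) = u • π m := fun u m => map_smul K.mkQ u m
  rw [eq_top_iff]
  have h1 : (⊤ : Submodule k (M ⧸ K)) = Submodule.map π ⊤ := by
    rw [Submodule.map_top, LinearMap.range_eq_top.mpr hπs]
  rw [h1, ← hss', (Submodule.gc_map_comap π).l_sSup]
  refine iSup₂_le fun W hW => ?_
  rcases eq_or_ne (Submodule.map π W) ⊥ with hb | hb
  · rw [hb]; exact bot_le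
  refine le_sSup ⟨?_, ?_, hb, ?_⟩
  · rintro u hu n ⟨m, hm, rfl⟩
    exact ⟨u • m, hW.1 u hu m hm, (hπc u m).symm⟩
  · haveI := hW.2.1
    infer_instance
  · intro Q hQle hQst
    have hQ'st : SubStable k s (W ⊓ Submodule.comap π Q) := by
      refine subStable_inf' s hW.1 ?_
      intro u hu m hm
      simp only [Submodule.mem_comap] at hm ⊢
      rw [hπc]
      exact hQst u hu _ hm
    rcases hW.2.2.2 _ inf_le_left hQ'st with h | h
    · left
      rw [eq_bot_iff]
      intro x hx
      obtain ⟨m, hmW, rfl⟩ := hQle hx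
      have : m ∈ W ⊓ Submodule.comap π Q := ⟨hmW, hx⟩
      rw [h] at this
      simp only [Submodule.mem_bot] at this
      subst this
      simp
    · right
      refine le_antisymm hQle ?_
      rw [Submodule.map_le_iff_le_comap]
      exact le_trans (le_of_eq h.symm) inf_le_right

theorem weight_lift' {H : Type*} [AddCommGroup H] [Module k H] (act : H → E)
    (μ : H →ₗ[k] k) (K : Submodule E M) (Cm : Submodule k M)
    (hst : ∀ x : H, ∀ m ∈ Cm, act x • m ∈ Cm)
    (hdisj : Cm ⊓ K.restrictScalars k = ⊥) (htop : K.restrictScalars k ⊔ Cm = ⊤)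
    (n : M ⧸ K) (hn : n ∈ weightSpace k act μ (M ⧸ K)) :
    ∃ m ∈ Cm, m ∈ weightSpace k act μ M ∧ K.mkQ m = n := by
  obtain ⟨m0, hm0⟩ := K.mkQ_surjective n
  have hm0top : m0 ∈ K.restrictScalars k ⊔ Cm := htop ▸ Submodule.mem_top
  rcases Submodule.mem_sup.mp hm0top with ⟨a, ha, c, hc, rfl⟩
  have hmkc : K.mkQ c = n := by
    have haz : K.mkQ a = 0 := by
      rwa [← LinearMap.mem_ker, K.ker_mkQ]
    rw [← hm0, map_add, haz, zero_add]
  refine ⟨c, hc, ?_, hmkc⟩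
  intro x
  have hd : K.mkQ (act x • c - μ x • c) = 0 := by
    have h2 : K.mkQ (μ x • c) = μ x • K.mkQ c := by
      rw [← algebraMap_smul E (μ x) c, map_smul, algebraMap_smul]
    rw [map_sub, map_smul, h2, hmkc, hn x, sub_self]
  have hdK : act x • c - μ x • c ∈ K.restrictScalars k := by
    rwa [← LinearMap.mem_ker, K.ker_mkQ] at hd
  have hdC : act x • c - μ x • c ∈ Cm := sub_mem (hst x c hc) (Cm.smul_mem _ hc)
  have : act x • c - μ x • c ∈ Cm ⊓ K.restrictScalars k := ⟨hdC, hdK⟩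
  rw [hdisj] at this
  simp only [Submodule.mem_bot, sub_eq_zero] at this
  exact this

end AuxProof

/-- An object `M` of `C_A^λ` satisfies `M = U(g⊗A)·M_λ` if and only if
`Hom_{C_A^λ}(M, N) = 0` for every object `N` of `C_A^λ` with `N_λ = 0`. -/
theorem generated_by_top_weight_space_iff_hom_vanishes
    {k : Type u} {g : Type v} {A : Type u} {U0 UA : Type w} [Field k] [IsAlgClosed k]
    [CharZero k] [AddCommGroup g] [Module k g] [FiniteDimensional k g]
    [CommRing A] [Algebra k A] [Ring U0] [Algebra k U0] [Ring UA] [Algebra k UA]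
    (L : LieSuperStr k g) (P : EnvPresentation k g U0 L)
    (C : CurrentPresentation k g A UA L)
    (r hsub nminus nplus : Submodule k g)
    (hr0 : r ≤ L.ε 0) (hrcl : ∀ x ∈ r, ∀ y ∈ r, L.br x y ∈ r) (hhr : hsub ≤ r)
    (hdec : nminus ⊔ hsub ⊔ nplus = ⊤)
    (hd1 : nminus ⊓ (hsub ⊔ nplus) = ⊥) (hd2 : hsub ⊓ nplus = ⊥)
    (Rplus : Set (Module.Dual k ↥hsub))
    (hnplus : nplus = sSup {N : Submodule k g | ∃ α ∈ Rplus,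
      ∀ x ∈ N, ∀ h : ↥hsub, L.br ↑h x = α h • x})
    (Δ : Type) (xp xm : Δ → g) (hc : Δ → ↥hsub)
    (hxp : ∀ α, xp α ∈ r ⊓ nplus) (hxm : ∀ α, xm α ∈ r ⊓ nminus)
    (htr1 : ∀ α, L.br (xp α) (xm α) = ↑(hc α))
    (htr2 : ∀ α, L.br ↑(hc α) (xp α) = (2 : k) • xp α)
    (htr3 : ∀ α, L.br ↑(hc α) (xm α) = -((2 : k) • xm α))
    (lam : Module.Dual k ↥hsub) (hX : MemXplus P hsub nplus lam)
    (nn : Δ → ℕ) (hnn : ∀ α, lam (hc α) = (nn α : k))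
    (M : ModuleOver k UA) (hM : InCat L C r hsub Rplus lam M) :
    Submodule.span UA
        ((weightSpace k (fun x : ↥hsub => C.ι ↑x 1) lam M.X : Submodule k M.X) : Set M.X)
      = ⊤ ↔
    ∀ N : ModuleOver k UA, InCat L C r hsub Rplus lam N →
      weightSpace k (fun x : ↥hsub => C.ι ↑x 1) lam N.X = ⊥ →
      ∀ f : M.X →ₗ[UA] N.X, f = 0 := by
  classical
  set s : Set UA := rSetCur L C r with hsdef
  set act : ↥hsub → UA := fun x : ↥hsub => C.ι ↑x 1 with hact
  have hacts : ∀ x : ↥hsub, act x ∈ s := fun x => ⟨(x : g), hhr x.2, rfl⟩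
  constructor
  · intro hspan N hN hNl f
    have hle : Submodule.span UA ((weightSpace k act lam M.X : Submodule k M.X) : Set M.X)
        ≤ LinearMap.ker f := by
      rw [Submodule.span_le]
      intro m hm
      have hfm : f m ∈ weightSpace k act lam N.X := by
        intro x
        have h1 : act x • f m = f (act x • m) := (map_smul f _ m).symm
        have h2 : act x • m = lam x • m := hm x
        rw [h1, h2, ← algebraMap_smul UA (lam x) m, map_smul, algebraMap_smul]
      rw [hNl] at hfm
      simpa using hfm
    rw [← LinearMap.ker_eq_top]
    exact le_antisymm le_top (hspan ▸ hle)
  · intro H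
    set K := Submodule.span UA
      ((weightSpace k act lam M.X : Submodule k M.X) : Set M.X) with hK
    obtain ⟨Cm, hCst, hCdisj, hCtop⟩ := exists_stable_compl' s hM.1 K
    have hCact : ∀ x : ↥hsub, ∀ m ∈ Cm, act x • m ∈ Cm :=
      fun x m hm => hCst (act x) (hacts x) m hm
    have hWK : weightSpace k act lam M.X ≤ K.restrictScalars k :=
      fun m hm => Submodule.subset_span hm
    let N : ModuleOver k UA := ModuleOver.mk (M.X ⧸ K)
    have hNin : InCat L C r hsub Rplus lam N := by
      refine ⟨finSS_quot' s hM.1 K, ?_⟩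
      intro μ hμ
      apply hM.2 μ
      obtain ⟨n, hn, hn0⟩ := (Submodule.ne_bot_iff _).mp hμ
      obtain ⟨m, hmC, hmw, hmk⟩ := weight_lift' act μ K Cm hCact hCdisj hCtop n hn
      refine (Submodule.ne_bot_iff _).mpr ⟨m, hmw, fun h => hn0 ?_⟩
      rw [← hmk, h, map_zero]
    have hNlam : weightSpace k act lam N.X = ⊥ := by
      rw [eq_bot_iff]
      intro n hn
      obtain ⟨m, hmC, hmw, hmk⟩ := weight_lift' act lam K Cm hCact hCdisj hCtop n hn
      have hm0 : m ∈ Cm ⊓ K.restrictScalars k := ⟨hmC, hWK hmw⟩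
      rw [hCdisj] at hm0
      simp only [Submodule.mem_bot] at hm0
      subst hm0
      rw [← hmk, map_zero]
      exact Submodule.zero_mem ⊥
    have h0 := H N hNin hNlam K.mkQ
    rw [eq_top_iff]
    intro m _
    have hm : K.mkQ m = 0 := by rw [h0]; rfl
    rwa [← LinearMap.mem_ker, K.ker_mkQ] at hm
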